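/- For 0 < q < p ≤ 1, n ∈ ℕ, and x ∈ [0,1], the (p,q)-Bernstein-Durrmeyer operator D_n^{p,q} satisfies D_n^{p,q}(e₁, x) = p[n]_{p,q} x / [n+2]_{p,q}, where e₁(t) = t. -/

import Mathlib

/-!
The (p,q)-integral of `t ^ a * (1 ⊖ q t) ^ s` is the (p,q)-Beta value
`p ^ (a s + C(s+1,2)) [a]! [s]! / [a+s+1]!`: induct on `s` using
`(1 ⊖ q t) ^ (s+1) = p ^ s (1 ⊖ q t) ^ s - q ^ (s+1) t (1 ⊖ q t) ^ s`, the base case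
`∫ t ^ a = 1 / [a+1]` being a geometric series. Plugged into `D_n(e₁, x)`, the `k`-th summand
collapses to `p / [n+2] · p ^ (n-k) [k] b_{n,k}(1,x)`. The remaining sum is the first moment
`[n] x` of the (p,q)-Bernstein basis, which reduces by absorption,
`[k+1] [n+1 choose k+1] = [n+1] [n choose k]`, to the partition of unity `∑ b_{n,k}(1,x) = 1`;
the latter follows by induction on `n` from the (p,q)-Pascal rule.
-/

noncomputable section

/-- The (p,q)-number [n]_{p,q} = (p^n - q^n)/(p - q). -/
def pqNum (p q : ℝ) (n : ℕ) : ℝ := (p ^ n - q ^ n) / (p - q)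

/-- The (p,q)-factorial [n]_{p,q}!. -/
def pqFactorial (p q : ℝ) (n : ℕ) : ℝ := ∏ k ∈ Finset.range n, pqNum p q (k + 1)

/-- The (p,q)-binomial coefficient. -/
def pqBinom (p q : ℝ) (n k : ℕ) : ℝ :=
  pqFactorial p q n / (pqFactorial p q (n - k) * pqFactorial p q k)

/-- The (p,q)-power basis (a ⊖ b)^n_{p,q} = ∏_{j=0}^{n-1} (p^j a - q^j b). -/
def pqPow (p q a b : ℝ) (n : ℕ) : ℝ := ∏ j ∈ Finset.range n, (p ^ j * a - q ^ j * b)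

/-- The (p,q)-derivative. -/
def pqDeriv (p q : ℝ) (f : ℝ → ℝ) (x : ℝ) : ℝ := (f (p * x) - f (q * x)) / ((p - q) * x)

/-- The (p,q)-integral of f over [0,1] (case 0 < q < p). -/
def pqInt (p q : ℝ) (f : ℝ → ℝ) : ℝ :=
  (p - q) * ∑' k : ℕ, (q ^ k / p ^ (k + 1)) * f (q ^ k / p ^ (k + 1))

/-- The (p,q)-Beta function B_{p,q}(m,n) = ∫₀¹ x^{m-1} (1 ⊖ qx)^{n-1} d_{p,q}x. -/
def pqBeta (p q : ℝ) (m n : ℕ) : ℝ :=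
  pqInt p q (fun x => x ^ (m - 1) * pqPow p q 1 (q * x) (n - 1))

/-- The (p,q)-Gamma function: Γ_{p,q}(n+1) = [n]_{p,q}!. -/
def pqGamma (p q : ℝ) (n : ℕ) : ℝ := pqFactorial p q (n - 1)

/-- The (p,q)-Bernstein basis b_{n,k}^{p,q}(1,x). -/
def bBasis (p q : ℝ) (n k : ℕ) (x : ℝ) : ℝ :=
  pqBinom p q n k * p ^ (k * (k - 1) / 2) / p ^ (n * (n - 1) / 2) * x ^ k *
    pqPow p q 1 x (n - k)

/-- The kernel b_{n,k}^{p,q}(t) = [n choose k] t^k (1 ⊖ qt)^{n-k}. -/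
def bKernel (p q : ℝ) (n k : ℕ) (t : ℝ) : ℝ :=
  pqBinom p q n k * t ^ k * pqPow p q 1 (q * t) (n - k)

/-- The (p,q)-Bernstein operator B_{n,p,q}(f,x). -/
def pqBernstein (p q : ℝ) (n : ℕ) (f : ℝ → ℝ) (x : ℝ) : ℝ :=
  ∑ k ∈ Finset.range (n + 1),
    bBasis p q n k x * f (p ^ (n - k) * pqNum p q k / pqNum p q n)

/-- The (p,q)-Bernstein-Durrmeyer operator D_n^{p,q}(f,x). -/
def pqDurrmeyer (p q : ℝ) (n : ℕ) (f : ℝ → ℝ) (x : ℝ) : ℝ :=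
  pqNum p q (n + 1) *
    ∑ k ∈ Finset.Icc 1 n, (p ^ ((n - k + 1) * (n + k) / 2))⁻¹ * bBasis p q n k x *
      pqInt p q (fun t => bKernel p q n (k - 1) t * f t)
  + bBasis p q n 0 x * f 0

open Finset

lemma pqNum_zero (p q : ℝ) : pqNum p q 0 = 0 := by
  simp [pqNum]

lemma pqNum_add (p q : ℝ) (a b : ℕ) :
    pqNum p q (a + b) = q ^ b * pqNum p q a + p ^ a * pqNum p q b := by
  unfold pqNum
  ring

lemma pqFactorial_zero (p q : ℝ) : pqFactorial p q 0 = 1 :=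
  prod_range_zero _

lemma pqFactorial_succ (p q : ℝ) (n : ℕ) :
    pqFactorial p q (n + 1) = pqFactorial p q n * pqNum p q (n + 1) :=
  prod_range_succ _ n

lemma pqPow_succ (p q a b : ℝ) (n : ℕ) :
    pqPow p q a b (n + 1) = pqPow p q a b n * (p ^ n * a - q ^ n * b) :=
  prod_range_succ _ n

section Binomial

variable {p q : ℝ} (hq : 0 ≤ q) (hqp : q < p)
include hq hqp

lemma pqNum_pos {m : ℕ} (hm : m ≠ 0) : 0 < pqNum p q m :=
  div_pos (sub_pos.2 (pow_lt_pow_left₀ hqp hq hm)) (sub_pos.2 hqp)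

lemma pqFactorial_pos (n : ℕ) : 0 < pqFactorial p q n :=
  prod_pos fun k _ => pqNum_pos hq hqp k.succ_ne_zero

lemma pqBinom_zero_right (n : ℕ) : pqBinom p q n 0 = 1 := by
  rw [pqBinom, Nat.sub_zero, pqFactorial_zero, mul_one, div_self (pqFactorial_pos hq hqp n).ne']

lemma pqBinom_self (n : ℕ) : pqBinom p q n n = 1 := by
  rw [pqBinom, Nat.sub_self, pqFactorial_zero, one_mul, div_self (pqFactorial_pos hq hqp n).ne']

lemma pqBinom_succ_succ (k m : ℕ) :
    pqBinom p q (k + m + 2) (k + 1) =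
      p ^ (k + 1) * pqBinom p q (k + m + 1) (k + 1) + q ^ (m + 1) * pqBinom p q (k + m + 1) k := by
  have hsplit : pqNum p q (k + m + 2) =
      q ^ (m + 1) * pqNum p q (k + 1) + p ^ (k + 1) * pqNum p q (m + 1) := by
    rw [← pqNum_add]; ring_nf
  simp only [pqBinom, show k + m + 2 - (k + 1) = m + 1 by omega,
    show k + m + 1 - (k + 1) = m by omega, show k + m + 1 - k = m + 1 by omega,
    show k + m + 2 = k + m + 1 + 1 by omega, pqFactorial_succ]
  have := pqFactorial_pos hq hqp
  have := pqNum_pos hq hqp (m := k + 1) (by omega)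
  have := pqNum_pos hq hqp (m := m + 1) (by omega)
  field_simp
  rw [show k + m + 1 + 1 = k + m + 2 by omega, hsplit]
  ring

lemma pqNum_mul_pqBinom_succ (k m : ℕ) :
    pqNum p q (k + 1) * pqBinom p q (k + m + 1) (k + 1) =
      pqNum p q (k + m + 1) * pqBinom p q (k + m) k := by
  simp only [pqBinom, show k + m + 1 - (k + 1) = m by omega, show k + m - k = m by omega,
    pqFactorial_succ]
  have := pqFactorial_pos hq hqp
  have := pqNum_pos hq hqp (m := k + 1) (by omega)
  field_simp

end Binomial

section BernsteinBasis

variable {p q : ℝ} (hq : 0 ≤ q) (hqp : q < p)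
include hq hqp

lemma bBasis_self (n : ℕ) (x : ℝ) : bBasis p q n n x = x ^ n := by
  have hp : p ^ (n * (n - 1) / 2) ≠ 0 := pow_ne_zero _ (hq.trans_lt hqp).ne'
  simp [bBasis, pqBinom_self hq hqp, pqPow, hp]

lemma bBasis_succ_zero (n : ℕ) (x : ℝ) :
    p ^ n * bBasis p q (n + 1) 0 x = (p ^ n - q ^ n * x) * bBasis p q n 0 x := by
  have hp : p ≠ 0 := (hq.trans_lt hqp).ne'
  simp only [bBasis, pqBinom_zero_right hq hqp, Nat.triangle_succ, Nat.sub_zero, pqPow_succ]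
  field_simp
  ring

lemma bBasis_succ_succ (k m : ℕ) (x : ℝ) :
    p ^ (k + m + 1) * bBasis p q (k + m + 2) (k + 1) x =
      p ^ (k + 1) * (p ^ m - q ^ m * x) * bBasis p q (k + m + 1) (k + 1) x +
        p ^ k * q ^ (m + 1) * x * bBasis p q (k + m + 1) k x := by
  have hp : p ≠ 0 := (hq.trans_lt hqp).ne'
  simp only [bBasis, pqBinom_succ_succ hq hqp, show k + m + 2 = k + m + 1 + 1 by omega,
    Nat.triangle_succ, show k + m + 1 + 1 - (k + 1) = m + 1 by omega,
    show k + m + 1 - (k + 1) = m by omega, show k + m + 1 - k = m + 1 by omega, pqPow_succ]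
  field_simp
  ring

lemma sum_bBasis (n : ℕ) (x : ℝ) : ∑ k ∈ range (n + 1), bBasis p q n k x = 1 := by
  induction n with
  | zero => simp [bBasis, pqBinom_zero_right hq hqp, pqPow]
  | succ n ih =>
    set A : ℕ → ℝ := fun k => p ^ k * (p ^ (n - k) - q ^ (n - k) * x)
    set B : ℕ → ℝ := fun k => p ^ k * q ^ (n - k) * x
    have hinterior : ∀ i ∈ range n, p ^ n * bBasis p q (n + 1) (i + 1) x =
        A (i + 1) * bBasis p q n (i + 1) x + B i * bBasis p q n i x := by
      intro i hi
      obtain ⟨m, rfl⟩ := Nat.exists_eq_add_of_lt (mem_range.1 hi)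
      simp only [A, B, show i + m + 1 - (i + 1) = m by omega, show i + m + 1 - i = m + 1 by omega]
      exact bBasis_succ_succ hq hqp i m x
    have hAB : ∀ k ∈ range (n + 1),
        A k * bBasis p q n k x + B k * bBasis p q n k x = p ^ n * bBasis p q n k x := by
      intro k hk
      have hpow : p ^ k * p ^ (n - k) = p ^ n := by
        rw [← pow_add, Nat.add_sub_cancel' (Nat.lt_succ_iff.1 (mem_range.1 hk))]
      simp only [A, B]
      linear_combination bBasis p q n k x * hpow
    have hsplit : p ^ n * ∑ k ∈ range (n + 1 + 1), bBasis p q (n + 1) k x =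
        ∑ k ∈ range (n + 1), A k * bBasis p q n k x +
          ∑ k ∈ range (n + 1), B k * bBasis p q n k x := by
      rw [mul_sum, sum_range_succ', sum_range_succ, sum_congr rfl hinterior, sum_add_distrib,
        sum_range_succ' (fun k => A k * bBasis p q n k x), sum_range_succ (fun k => B k * _),
        bBasis_succ_zero hq hqp, bBasis_self hq hqp, bBasis_self hq hqp]
      simp only [A, B, Nat.sub_self, Nat.sub_zero, pow_zero]
      ring
    rw [← sum_add_distrib, sum_congr rfl hAB, ← mul_sum, ih] at hsplit
    exact mul_left_cancel₀ (pow_ne_zero n (hq.trans_lt hqp).ne') hsplit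

lemma bBasis_succ_succ_mul_pqNum (k m : ℕ) (x : ℝ) :
    bBasis p q (k + m + 1) (k + 1) x * (p ^ m * pqNum p q (k + 1)) =
      pqNum p q (k + m + 1) * x * bBasis p q (k + m) k x := by
  have hp : p ≠ 0 := (hq.trans_lt hqp).ne'
  have habsorb := pqNum_mul_pqBinom_succ hq hqp k m
  simp only [bBasis, Nat.triangle_succ, show k + m + 1 - (k + 1) = m by omega,
    show k + m - k = m by omega, pow_add]
  field_simp
  linear_combination x * x ^ k * pqPow p q 1 x m * habsorb

lemma sum_bBasis_mul_pqNum (n : ℕ) (x : ℝ) :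
    ∑ k ∈ range (n + 1), bBasis p q n k x * (p ^ (n - k) * pqNum p q k) = pqNum p q n * x := by
  cases n with
  | zero => simp [pqNum_zero]
  | succ n =>
    have hterm : ∀ i ∈ range (n + 1),
        bBasis p q (n + 1) (i + 1) x * (p ^ (n + 1 - (i + 1)) * pqNum p q (i + 1)) =
          pqNum p q (n + 1) * x * bBasis p q n i x := by
      intro i hi
      obtain ⟨m, rfl⟩ := Nat.exists_eq_add_of_le (Nat.lt_succ_iff.1 (mem_range.1 hi))
      rw [show i + m + 1 - (i + 1) = m by omega]
      exact bBasis_succ_succ_mul_pqNum hq hqp i m x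
    rw [sum_range_succ', sum_congr rfl hterm, ← mul_sum, sum_bBasis hq hqp, pqNum_zero]
    ring

end BernsteinBasis

section Integral

lemma pqInt_const_mul (p q c : ℝ) (f : ℝ → ℝ) :
    pqInt p q (fun t => c * f t) = c * pqInt p q f := by
  simp only [pqInt, mul_left_comm _ c, tsum_mul_left]

lemma pow_div_pow_succ {K : Type*} [Field K] (a b : K) (k : ℕ) :
    a ^ k / b ^ (k + 1) = (a / b) ^ k / b := by
  rw [div_pow, pow_succ, div_div]

variable {p q : ℝ} (hq : 0 ≤ q) (hqp : q < p)
include hq hqp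

lemma summable_pqInt {f : ℝ → ℝ} (hf : Continuous f) :
    Summable fun k : ℕ => q ^ k / p ^ (k + 1) * f (q ^ k / p ^ (k + 1)) := by
  have hp : 0 < p := hq.trans_lt hqp
  have hr : q / p < 1 := (div_lt_one hp).2 hqp
  obtain ⟨C, hC⟩ :=
    (isCompact_Icc (a := 0) (b := 1 / p)).exists_bound_of_continuousOn hf.continuousOn
  refine .of_norm_bounded ((summable_geometric_of_lt_one (by positivity) hr).mul_left (C / p))
    fun k => ?_
  have hnode : (q / p) ^ k / p ∈ Set.Icc 0 (1 / p) :=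
    ⟨by positivity, div_le_div_of_nonneg_right (pow_le_one₀ (by positivity) hr.le) hp.le⟩
  rw [pow_div_pow_succ, norm_mul, Real.norm_of_nonneg hnode.1]
  calc (q / p) ^ k / p * ‖f ((q / p) ^ k / p)‖ ≤ (q / p) ^ k / p * C :=
        mul_le_mul_of_nonneg_left (hC _ hnode) hnode.1
    _ = C / p * (q / p) ^ k := by ring

lemma pqInt_sub {f g : ℝ → ℝ} (hf : Continuous f) (hg : Continuous g) :
    pqInt p q (fun t => f t - g t) = pqInt p q f - pqInt p q g := by
  simp only [pqInt, mul_sub]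
  rw [(summable_pqInt hq hqp hf).tsum_sub (summable_pqInt hq hqp hg), mul_sub]

lemma pqInt_pow (a : ℕ) : pqInt p q (fun t => t ^ a) = 1 / pqNum p q (a + 1) := by
  have hp : 0 < p := hq.trans_lt hqp
  have hr : (q / p) ^ (a + 1) < 1 :=
    pow_lt_one₀ (by positivity) ((div_lt_one hp).2 hqp) a.succ_ne_zero
  have hne : p ^ (a + 1) - q ^ (a + 1) ≠ 0 :=
    (sub_pos.2 (pow_lt_pow_left₀ hqp hq a.succ_ne_zero)).ne'
  have hterm : ∀ k : ℕ, q ^ k / p ^ (k + 1) * (q ^ k / p ^ (k + 1)) ^ a =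
      1 / p ^ (a + 1) * ((q / p) ^ (a + 1)) ^ k := by
    intro k
    rw [pow_div_pow_succ, ← pow_succ', div_pow, ← pow_mul, ← pow_mul, mul_comm k]
    ring
  simp only [pqInt, hterm, tsum_mul_left]
  rw [tsum_geometric_of_lt_one (by positivity) hr, div_pow, pqNum]
  have := sub_ne_zero.2 hqp.ne'
  field_simp

lemma pqInt_pow_mul_pqPow (a s : ℕ) :
    pqInt p q (fun t => t ^ a * pqPow p q 1 (q * t) s) =
      p ^ (a * s + (s + 1).choose 2) * pqFactorial p q a * pqFactorial p q s /
        pqFactorial p q (a + s + 1) := by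
  induction s generalizing a with
  | zero =>
    have := pqNum_pos hq hqp a.succ_ne_zero
    have := pqFactorial_pos hq hqp a
    simp only [pqPow, prod_range_zero, mul_one, pqInt_pow hq hqp, pqFactorial_succ,
      pqFactorial_zero, Nat.add_zero, Nat.mul_zero, show (0 + 1).choose 2 = 0 from rfl, pow_zero]
    field_simp
  | succ s ih =>
    have hcont : ∀ b, Continuous fun t : ℝ => t ^ b * pqPow p q 1 (q * t) s := by
      intro b; unfold pqPow; fun_prop
    have hrec : (fun t : ℝ => t ^ a * pqPow p q 1 (q * t) (s + 1)) = fun t =>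
        p ^ s * (t ^ a * pqPow p q 1 (q * t) s) -
          q ^ (s + 1) * (t ^ (a + 1) * pqPow p q 1 (q * t) s) := by
      funext t
      rw [pqPow_succ]
      ring
    rw [hrec, pqInt_sub hq hqp ((hcont a).const_mul _) ((hcont (a + 1)).const_mul _),
      pqInt_const_mul, pqInt_const_mul, ih, ih]
    have hexp₁ : (a + 1) * s + (s + 1).choose 2 = a * s + (s + 1).choose 2 + s := by ring
    have hexp₂ : a * (s + 1) + (s + 1 + 1).choose 2 = a * s + (s + 1).choose 2 + s + (a + 1) := by
      rw [Nat.choose_succ_succ' (s + 1), Nat.choose_one_right]; ring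
    have hfac₁ : pqFactorial p q (a + 1 + s + 1) =
        pqFactorial p q (a + s + 1) * pqNum p q (a + s + 2) := by
      rw [show a + 1 + s + 1 = a + s + 1 + 1 by ring]; exact pqFactorial_succ p q (a + s + 1)
    have hfac₂ : pqFactorial p q (a + (s + 1) + 1) =
        pqFactorial p q (a + s + 1) * pqNum p q (a + s + 2) :=
      pqFactorial_succ p q (a + s + 1)
    have hsplit : pqNum p q (a + s + 2) =
        q ^ (s + 1) * pqNum p q (a + 1) + p ^ (a + 1) * pqNum p q (s + 1) := by
      rw [← pqNum_add]; ring_nf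
    rw [hexp₁, hexp₂, hfac₁, hfac₂, pqFactorial_succ p q a, pqFactorial_succ p q s]
    have := pqFactorial_pos hq hqp
    have := pqNum_pos hq hqp (m := a + s + 2) (by omega)
    field_simp
    rw [hsplit]
    ring

lemma pqInt_bKernel_mul_id {n j : ℕ} (hj : j < n) :
    pqInt p q (fun t => bKernel p q n j t * t) =
      p ^ ((n - j) * (n + j + 1) / 2) * p ^ (n - j) * pqNum p q (j + 1) /
        (pqNum p q (n + 1) * pqNum p q (n + 2)) := by
  obtain ⟨m, rfl⟩ := Nat.exists_eq_add_of_lt hj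
  have hfun : (fun t => bKernel p q (j + m + 1) j t * t) =
      fun t => pqBinom p q (j + m + 1) j * (t ^ (j + 1) * pqPow p q 1 (q * t) (m + 1)) := by
    funext t
    rw [bKernel, show j + m + 1 - j = m + 1 by omega]
    ring
  have hexp : (j + 1) * (m + 1) + (m + 1 + 1).choose 2 =
      (m + 1) * (j + m + 1 + j + 1) / 2 + (m + 1) := by
    rw [Nat.choose_two_right, show (m + 1) * (j + m + 1 + j + 1) =
      (m + 1 + 1) * (m + 1 + 1 - 1) + 2 * ((m + 1) * j) by rw [Nat.add_sub_cancel]; ring,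
      Nat.add_mul_div_left _ _ two_pos]
    ring
  have hfac : pqFactorial p q (j + 1 + (m + 1) + 1) =
      pqFactorial p q (j + m + 1) * pqNum p q (j + m + 1 + 1) * pqNum p q (j + m + 1 + 2) := by
    rw [show j + 1 + (m + 1) + 1 = j + m + 1 + 1 + 1 by ring, pqFactorial_succ, pqFactorial_succ]
  rw [hfun, pqInt_const_mul, pqInt_pow_mul_pqPow hq hqp, hexp, pow_add, hfac, pqBinom,
    show j + m + 1 - j = m + 1 by omega, pqFactorial_succ p q j]
  have := (pqFactorial_pos hq hqp (j + m + 1)).ne'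
  have := (pqFactorial_pos hq hqp (m + 1)).ne'
  have := (pqFactorial_pos hq hqp j).ne'
  have := pqNum_pos hq hqp (m := j + m + 1 + 1) (by omega)
  have := pqNum_pos hq hqp (m := j + m + 1 + 2) (by omega)
  field_simp

end Integral

theorem pqDurrmeyer_e1_general (p q : ℝ) (hq : 0 < q) (hqp : q < p)
    (n : ℕ) (x : ℝ) :
    pqDurrmeyer p q n (fun t => t) x = p * pqNum p q n * x / pqNum p q (n + 2) := by
  set g : ℕ → ℝ := fun k => bBasis p q n k x * (p ^ (n - k) * pqNum p q k)
  have hterm : ∀ k ∈ Icc 1 n,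
      (p ^ ((n - k + 1) * (n + k) / 2))⁻¹ * bBasis p q n k x *
          pqInt p q (fun t => bKernel p q n (k - 1) t * t) =
        p / (pqNum p q (n + 1) * pqNum p q (n + 2)) * g k := by
    intro k hk
    obtain ⟨j, rfl⟩ : ∃ j, k = j + 1 := ⟨k - 1, by grind⟩
    have hpow : p ^ (n - j) = p ^ (n - (j + 1)) * p := by
      rw [← pow_succ]; congr 1; grind
    rw [Nat.add_sub_cancel, pqInt_bKernel_mul_id hq.le hqp (by grind),
      show n - (j + 1) + 1 = n - j by grind, ← add_assoc, hpow]
    have hp : 0 < p := hq.trans hqp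
    simp only [g]
    field_simp
  have hg : ∑ k ∈ Icc 1 n, g k = ∑ k ∈ range (n + 1), g k := by
    rw [range_eq_Ico, sum_eq_sum_Ico_succ_bot (Nat.succ_pos n), zero_add, Nat.succ_eq_add_one,
      Ico_add_one_right_eq_Icc]
    simp [g, pqNum_zero]
  rw [pqDurrmeyer, mul_zero, add_zero, sum_congr rfl hterm, ← mul_sum, hg,
    sum_bBasis_mul_pqNum hq.le hqp]
  have := pqNum_pos hq.le hqp n.succ_ne_zero
  field_simp

theorem pqDurrmeyer_e1 (p q : ℝ) (hq : 0 < q) (hqp : q < p) (hp : p ≤ 1)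
    (n : ℕ) (x : ℝ) (hx : x ∈ Set.Icc (0 : ℝ) 1) :
    pqDurrmeyer p q n (fun t => t) x = p * pqNum p q n * x / pqNum p q (n + 2) :=
  pqDurrmeyer_e1_general p q hq hqp n x
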